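/- arXiv:2507.19163 — 5 statements merged into one kernel-verified Lean document; each statement's English description precedes it below -/
import Mathlib

section
/- Let k be a field and let f_1, ..., f_n be nonzero linear forms in variables s_1, ..., s_d over k that span pairwise distinct lines in the polynomial ring k[s_1,...,s_d]. Then the rational functions 1/f_1, ..., 1/f_n are linearly independent over k. -/
/-!
Multiplying a vanishing combination `∑ gⱼ / fⱼ` by `∏ fⱼ` gives the polynomial identity
`∑ gⱼ ∏_{l ≠ j} f_l = 0`. Each `fᵢ` is prime (a linear form is irreducible) and divides no other
`fⱼ` (a linear form dividing another one is proportional to it), so it divides every term but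
`gᵢ ∏_{l ≠ i} f_l`, hence divides the constant `gᵢ`, which forces `gᵢ = 0`.
-/

open MvPolynomial

theorem Finset.prod_mul_sum_div {ι F : Type*} [DecidableEq ι] [Field F] (s : Finset ι)
    (a b : ι → F) (hb : ∀ j ∈ s, b j ≠ 0) :
    (∏ l ∈ s, b l) * ∑ j ∈ s, a j / b j = ∑ j ∈ s, a j * ∏ l ∈ s.erase j, b l := by
  rw [Finset.mul_sum]
  refine Finset.sum_congr rfl fun j hj => ?_
  rw [← Finset.mul_prod_erase s b hj]
  field_simp [hb j hj]

theorem Prime.dvd_of_sum_mul_prod_erase_eq_zero {ι R : Type*} [DecidableEq ι] [CommRing R]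
    {s : Finset ι} {c p : ι → R} {i : ι} (hi : i ∈ s) (hpi : Prime (p i))
    (hndvd : ∀ j ∈ s, j ≠ i → ¬ p i ∣ p j)
    (hsum : ∑ j ∈ s, c j * ∏ l ∈ s.erase j, p l = 0) :
    p i ∣ c i := by
  have hdvd : p i ∣ c i * ∏ l ∈ s.erase i, p l := by
    rw [← Finset.add_sum_erase s _ hi, add_eq_zero_iff_eq_neg] at hsum
    rw [hsum, dvd_neg]
    refine Finset.dvd_sum fun j hj => Dvd.dvd.mul_left (Finset.dvd_prod_of_mem p ?_) _
    exact Finset.mem_erase.mpr ⟨(Finset.ne_of_mem_erase hj).symm, hi⟩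
  refine (hpi.dvd_or_dvd hdvd).resolve_right fun hprod => ?_
  obtain ⟨j, hj, hdvdj⟩ := hpi.exists_mem_finset_dvd hprod
  exact hndvd j (Finset.mem_of_mem_erase hj) (Finset.ne_of_mem_erase hj) hdvdj

theorem linearIndependent_inv_algebraMap_of_prime {ι K R F : Type*} [Field K] [CommRing R]
    [Field F] [Algebra K R] [Algebra R F] [Algebra K F] [IsScalarTower K R F]
    [FaithfulSMul R F] {p : ι → R} (hp : ∀ i, Prime (p i))
    (hndvd : Pairwise fun i j => ¬ p i ∣ p j) :
    LinearIndependent K fun i => (algebraMap R F (p i))⁻¹ := by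
  classical
  rw [linearIndependent_iff']
  intro s g hg i hi
  by_contra hgi
  have hp0 : ∀ j ∈ s, algebraMap R F (p j) ≠ 0 := fun j _ =>
    (map_ne_zero_iff _ (FaithfulSMul.algebraMap_injective R F)).mpr (hp j).ne_zero
  have hcleared : ∑ j ∈ s, algebraMap K R (g j) * ∏ l ∈ s.erase j, p l = 0 := by
    apply FaithfulSMul.algebraMap_injective R F
    simp only [map_zero, map_sum, map_mul, map_prod]
    rw [← Finset.prod_mul_sum_div s _ _ hp0]
    simp only [Algebra.smul_def, IsScalarTower.algebraMap_apply K R F] at hg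
    simp only [div_eq_mul_inv, hg, mul_zero]
  have hdvd := (hp i).dvd_of_sum_mul_prod_erase_eq_zero hi
    (fun j _ hji => hndvd hji.symm) hcleared
  exact (hp i).not_isUnit (isUnit_of_dvd_unit hdvd ((Ne.isUnit hgi).map _))

namespace MvPolynomial

variable {σ : Type*}

theorem irreducible_of_totalDegree_eq_one_of_field {K : Type*} [Field K]
    {p : MvPolynomial σ K} (hp : p.totalDegree = 1) : Irreducible p := by
  refine irreducible_of_totalDegree_eq_one hp fun x hx => ?_
  refine isUnit_iff_ne_zero.mpr fun hx0 => ?_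
  have : p = 0 := by
    ext m
    simpa [hx0] using hx m
  simp [this] at hp

theorem exists_eq_C_mul_of_dvd_of_totalDegree_eq {R : Type*} [CommRing R] [IsDomain R]
    {p q : MvPolynomial σ R} (hdvd : p ∣ q) (hq : q ≠ 0)
    (hdeg : p.totalDegree = q.totalDegree) : ∃ c, q = C c * p := by
  obtain ⟨r, rfl⟩ := hdvd
  have hr : r.totalDegree = 0 := by
    rw [totalDegree_mul_of_isDomain (left_ne_zero_of_mul hq) (right_ne_zero_of_mul hq)] at hdeg
    omega
  exact ⟨r.coeff 0, by rw [mul_comm, ← totalDegree_eq_zero_iff_eq_C.mp hr]⟩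

end MvPolynomial

/-- Nonzero linear forms spanning pairwise distinct lines have linearly
independent reciprocals in the field of rational functions. -/
theorem reciprocals_of_linear_forms_linearIndependent
    (K : Type*) [Field K] (d n : ℕ)
    (f : Fin n → MvPolynomial (Fin d) K)
    (hhom : ∀ i, (f i).IsHomogeneous 1)
    (hne : ∀ i, f i ≠ 0)
    (hlines : ∀ i j, i ≠ j → ∀ c : K, f i ≠ c • f j) :
    LinearIndependent K
      (fun i => (algebraMap (MvPolynomial (Fin d) K)
        (FractionRing (MvPolynomial (Fin d) K)) (f i))⁻¹) := by
  have hdeg : ∀ i, (f i).totalDegree = 1 := fun i => (hhom i).totalDegree (hne i)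
  refine linearIndependent_inv_algebraMap_of_prime
    (fun i => (irreducible_of_totalDegree_eq_one_of_field (hdeg i)).prime)
    fun i j hij hdvd => ?_
  obtain ⟨c, hc⟩ :=
    exists_eq_C_mul_of_dvd_of_totalDegree_eq hdvd (hne j) ((hdeg i).trans (hdeg j).symm)
  exact hlines j i hij.symm c (by rw [hc, smul_eq_C_mul])
end

section
/- Let V be a finite-dimensional vector space with basis (e_i)_{i ∈ I}, let W ≤ V be a subspace of dimension k+1, and suppose that for every subset S ⊆ I with |S| = d (where 1 ≤ d ≤ dim V − (k+1)) the intersection W ∩ span{e_i : i ∈ S} is nonzero. Then for every subset S ⊆ I with |S| = d − 1, the intersection W ∩ span{e_i : i ∈ S} is also nonzero. -/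
/-!
If `W` met the span of the `d - 1` basis vectors indexed by `S` only in `0`, then for every
`i ∉ S` a nonzero vector of `W` in the span of `S ∪ {i}` must have a nonzero `e_i`-coordinate,
so `e_i ∈ W + span (e_S)`. Hence `W + span (e_S) = V`, and
`dim V ≤ (k + 1) + (d - 1) < dim V`.
-/

open Submodule Module

section

variable {K V : Type*} [DivisionRing K] [AddCommGroup V] [Module K V]

theorem mem_sup_of_inf_eq_bot_of_inf_span_singleton_sup_ne_bot {W U : Submodule K V} {v : V}
    (hWU : W ⊓ U = ⊥) (hv : W ⊓ (K ∙ v ⊔ U) ≠ ⊥) : v ∈ W ⊔ U := by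
  obtain ⟨w, ⟨hwW, hw⟩, hw0⟩ := (Submodule.ne_bot_iff _).1 hv
  obtain ⟨y, hy, u, hu, rfl⟩ := mem_sup.1 hw
  obtain ⟨c, rfl⟩ := mem_span_singleton.1 hy
  have hc : c ≠ 0 := by
    rintro rfl
    rw [zero_smul, zero_add] at hwW hw0
    exact hw0 ((mem_bot K).1 (hWU ▸ mem_inf.2 ⟨hwW, hu⟩))
  have hv_eq : v = c⁻¹ • (c • v + u) - c⁻¹ • u := by
    rw [smul_add, inv_smul_smul₀ hc, add_sub_cancel_right]
  rw [hv_eq]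
  exact sub_mem (smul_mem _ _ (mem_sup_left hwW)) (smul_mem _ _ (mem_sup_right hu))

theorem Module.Basis.sup_span_image_eq_top {I : Type*} (b : Basis I K V) {W : Submodule K V}
    {S : Set I} (hS : W ⊓ span K (b '' S) = ⊥)
    (hinsert : ∀ i ∉ S, W ⊓ span K (b '' insert i S) ≠ ⊥) :
    W ⊔ span K (b '' S) = ⊤ := by
  refine eq_top_iff.2 (b.span_eq ▸ span_le.2 ?_)
  rintro _ ⟨i, rfl⟩
  by_cases hi : i ∈ S
  · exact mem_sup_right (subset_span (Set.mem_image_of_mem b hi))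
  · refine mem_sup_of_inf_eq_bot_of_inf_span_singleton_sup_ne_bot hS ?_
    simpa only [Set.image_insert_eq, span_insert] using hinsert i hi

theorem finrank_span_image_finset_le {I : Type*} [DecidableEq V] (f : I → V) (S : Finset I) :
    finrank K (span K (f '' S)) ≤ S.card := by
  rw [← Finset.coe_image]
  exact (finrank_span_finset_le_card _).trans Finset.card_image_le

end

theorem nontrivial_inter_coord_spans_downward_general
    (K V : Type*) [Field K] [AddCommGroup V] [Module K V] [FiniteDimensional K V]
    (I : Type*) (b : Module.Basis I K V)
    (k d : ℕ) (hd1 : 1 ≤ d) (hd2 : d ≤ Module.finrank K V - (k + 1))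
    (W : Submodule K V) (hW : Module.finrank K W = k + 1)
    (h : ∀ S : Finset I, S.card = d →
      W ⊓ Submodule.span K (b '' (S : Set I)) ≠ ⊥) :
    ∀ S : Finset I, S.card = d - 1 →
      W ⊓ Submodule.span K (b '' (S : Set I)) ≠ ⊥ := by
  classical
  intro S hS hbot
  have htop : W ⊔ span K (b '' (S : Set I)) = ⊤ := by
    refine b.sup_span_image_eq_top hbot fun i hi => ?_
    rw [← Finset.coe_insert]
    exact h _ (by rw [Finset.card_insert_of_notMem hi, hS]; omega)
  have hle : finrank K V ≤ (k + 1) + (d - 1) :=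
    calc finrank K V = finrank K (W ⊔ span K (b '' (S : Set I)) :) := by rw [htop, finrank_top]
      _ ≤ finrank K W + finrank K (span K (b '' (S : Set I))) :=
        finrank_add_le_finrank_add_finrank _ _
      _ ≤ (k + 1) + (d - 1) := by
        rw [hW, ← hS]
        exact Nat.add_le_add_left (finrank_span_image_finset_le b S) _
  omega

/-- Inductive step: if a `(k+1)`-dimensional subspace `W` meets the span of every
`d` basis vectors nontrivially (with `1 ≤ d ≤ dim V − (k+1)`), then it also meets
the span of every `d − 1` basis vectors nontrivially. -/
theorem nontrivial_inter_coord_spans_downward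
    (K V : Type*) [Field K] [AddCommGroup V] [Module K V] [FiniteDimensional K V]
    (I : Type*) [Fintype I] (b : Module.Basis I K V)
    (k d : ℕ) (hd1 : 1 ≤ d) (hd2 : d ≤ Module.finrank K V - (k + 1))
    (W : Submodule K V) (hW : Module.finrank K W = k + 1)
    (h : ∀ S : Finset I, S.card = d →
      W ⊓ Submodule.span K (b '' (S : Set I)) ≠ ⊥) :
    ∀ S : Finset I, S.card = d - 1 →
      W ⊓ Submodule.span K (b '' (S : Set I)) ≠ ⊥ :=
  nontrivial_inter_coord_spans_downward_general K V I b k d hd1 hd2 W hW h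
end

section
/- Let k be an infinite field and let v_1, ..., v_m ∈ k^d be vectors, none of which is zero. Suppose that for all s ∈ k^d for which all inner products ⟨s, v_j⟩ are nonzero, we have E_{m−1}(⟨s, v_1⟩, ..., ⟨s, v_m⟩) = 0, where E_{m−1} is the (m−1)-st elementary symmetric polynomial in m variables. Then there exists a partition of {1, ..., m} into parts π^1, ..., π^k and nonzero scalars c_1, ..., c_m and vectors w_1, ..., w_k ∈ k^d such that v_j = c_j · w_i whenever j ∈ π^i, the vectors w_1, ..., w_k span pairwise distinct lines, and for each i, ∑_{j ∈ π^i} 1/c_j = 0. -/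
open MvPolynomial Finset

private lemma esymm_eval_pred {k : Type*} [CommSemiring k] {m : ℕ} (hm : 0 < m)
    (x : Fin m → k) :
    MvPolynomial.eval x (MvPolynomial.esymm (Fin m) k (m - 1)) =
      ∑ j : Fin m, ∏ i ∈ Finset.univ.erase j, x i := by
  classical
  rw [MvPolynomial.esymm, map_sum]
  refine (Finset.sum_bij (fun (j : Fin m) _ => Finset.univ.erase j) ?_ ?_ ?_ ?_).symm
  · intro j _
    rw [Finset.mem_powersetCard]
    exact ⟨Finset.subset_univ _, by simp [Finset.card_erase_of_mem]⟩
  · intro j _ j' _ hjj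
    by_contra hne
    have : j ∈ Finset.univ.erase j' := Finset.mem_erase.2 ⟨hne, Finset.mem_univ _⟩
    rw [← hjj] at this
    exact (Finset.mem_erase.1 this).1 rfl
  · intro A hA
    rw [Finset.mem_powersetCard] at hA
    have hcard : (Finset.univ \ A).card = 1 := by
      rw [Finset.card_sdiff_of_subset hA.1, hA.2, Finset.card_univ, Fintype.card_fin]
      omega
    obtain ⟨j, hj⟩ := Finset.card_eq_one.1 hcard
    refine ⟨j, Finset.mem_univ _, ?_⟩
    have hjA : j ∉ A := by
      have : j ∈ Finset.univ \ A := hj ▸ Finset.mem_singleton_self j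
      exact (Finset.mem_sdiff.1 this).2
    have hsub : A ⊆ Finset.univ.erase j := fun a ha =>
      Finset.mem_erase.2 ⟨fun h => hjA (h ▸ ha), Finset.mem_univ _⟩
    refine (Finset.eq_of_subset_of_card_le hsub ?_).symm
    rw [hA.2, Finset.card_erase_of_mem (Finset.mem_univ _), Finset.card_univ, Fintype.card_fin]
  · intro j _
    rw [map_prod]
    exact Finset.prod_congr rfl fun i _ => (eval_X _).symm

private lemma eval_linear {k : Type*} [CommSemiring k] {d : ℕ} (w : Fin d → k) (s : Fin d → k) :
    MvPolynomial.eval s (∑ t, MvPolynomial.C (w t) * MvPolynomial.X t) = ∑ t, s t * w t := by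
  rw [map_sum]
  exact Finset.sum_congr rfl fun t _ => by rw [map_mul, eval_C, eval_X, mul_comm]

private lemma linear_ne_zero {k : Type*} [Field k] {d : ℕ} {w : Fin d → k} (hw : w ≠ 0) :
    (∑ t, MvPolynomial.C (w t) * MvPolynomial.X t : MvPolynomial (Fin d) k) ≠ 0 := by
  classical
  obtain ⟨t, ht⟩ : ∃ t, w t ≠ 0 := by
    by_contra hc; push_neg at hc; exact hw (funext hc)
  intro h0
  have h1 := eval_linear w (Pi.single t (1 : k))
  rw [h0, map_zero] at h1
  have h2 : ∑ t', (Pi.single t 1 : Fin d → k) t' * w t' = w t := by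
    rw [Finset.sum_eq_single t]
    · simp
    · intro b _ hb; simp [Pi.single_apply, hb]
    · intro hb; exact absurd (Finset.mem_univ t) hb
  rw [h2] at h1
  exact ht h1.symm

private lemma exists_eval_ne {k : Type*} [Field k] [Infinite k] {d : ℕ}
    {p : MvPolynomial (Fin d) k} (hp : p ≠ 0) : ∃ s, MvPolynomial.eval s p ≠ 0 := by
  by_contra hc; push_neg at hc
  exact hp (MvPolynomial.funext fun x => by rw [hc x, map_zero])

/-- If the `(m−1)`-st elementary symmetric polynomial vanishes on the tuple of
pairings `⟨s, vⱼ⟩` for every `s` making all pairings nonzero, then the `vⱼ`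
group into proportionality classes with reciprocal-sum of the scalars zero on
each class. -/
theorem esymm_vanishing_pairings_structure
    (k : Type*) [Field k] [Infinite k] (d m : ℕ)
    (v : Fin m → (Fin d → k)) (hv : ∀ j, v j ≠ 0)
    (h : ∀ s : Fin d → k, (∀ j, (∑ i, s i * v j i) ≠ 0) →
      MvPolynomial.eval (fun j : Fin m => ∑ i, s i * v j i)
        (MvPolynomial.esymm (Fin m) k (m - 1)) = 0) :
    ∃ (r : ℕ) (π : Fin m → Fin r) (c : Fin m → k) (w : Fin r → (Fin d → k)),
      Function.Surjective π ∧
      (∀ j, c j ≠ 0) ∧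
      (∀ j, v j = c j • w (π j)) ∧
      (∀ i i', i ≠ i' → ∀ t : k, w i ≠ t • w i') ∧
      (∀ i : Fin r, ∑ j ∈ Finset.univ.filter (fun j => π j = i), (c j)⁻¹ = 0) := by
  classical
  rcases Nat.eq_zero_or_pos m with hm | hm
  · subst hm
    exfalso
    have h0 := h 0 (fun j => j.elim0)
    rw [show (0 : ℕ) - 1 = 0 from rfl, MvPolynomial.esymm_zero, map_one] at h0
    exact one_ne_zero h0
  -- set up the proportionality classes
  have hequiv : Equivalence (fun j j' : Fin m => ∃ t : k, t ≠ 0 ∧ v j = t • v j') := by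
    constructor
    · intro j; exact ⟨1, one_ne_zero, (one_smul _ _).symm⟩
    · rintro j j' ⟨t, ht, hjj⟩
      exact ⟨t⁻¹, inv_ne_zero ht, by rw [hjj, smul_smul, inv_mul_cancel₀ ht, one_smul]⟩
    · rintro j j' j'' ⟨t, ht, h1⟩ ⟨u, hu, h2⟩
      exact ⟨t * u, mul_ne_zero ht hu, by rw [h1, h2, smul_smul]⟩
  let sd : Setoid (Fin m) := ⟨_, hequiv⟩
  let r := Fintype.card (Quotient sd)
  let e : Quotient sd ≃ Fin r := Fintype.equivFin _
  let π : Fin m → Fin r := fun j => e (Quotient.mk sd j)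
  let w : Fin r → Fin d → k := fun i => v ((e.symm i).out)
  have hw0 : ∀ i, w i ≠ 0 := fun i => hv _
  have hrel : ∀ j : Fin m, ∃ t : k, t ≠ 0 ∧ v j = t • w (π j) := by
    intro j
    have h1 := Quotient.exact (Quotient.out_eq (Quotient.mk sd j))
    obtain ⟨t, ht, hvt⟩ := h1
    refine ⟨t⁻¹, inv_ne_zero ht, ?_⟩
    show v j = t⁻¹ • v ((e.symm (e (Quotient.mk sd j))).out)
    rw [e.symm_apply_apply, hvt, smul_smul, inv_mul_cancel₀ ht, one_smul]
  let c : Fin m → k := fun j => Classical.choose (hrel j)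
  have hc : ∀ j, c j ≠ 0 := fun j => (Classical.choose_spec (hrel j)).1
  have hvc : ∀ j, v j = c j • w (π j) := fun j => (Classical.choose_spec (hrel j)).2
  have hπsurj : Function.Surjective π := by
    intro i
    refine ⟨(e.symm i).out, ?_⟩
    show e (Quotient.mk sd ((e.symm i).out)) = i
    rw [Quotient.out_eq, e.apply_symm_apply]
  have hwdist : ∀ i i', i ≠ i' → ∀ t : k, w i ≠ t • w i' := by
    intro i i' hne t heq
    have ht : t ≠ 0 := by
      rintro rfl; rw [zero_smul] at heq; exact hw0 i heq
    have hr : Quotient.mk sd ((e.symm i).out) = Quotient.mk sd ((e.symm i').out) :=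
      Quotient.sound ⟨t, ht, heq⟩
    rw [Quotient.out_eq, Quotient.out_eq] at hr
    exact hne (e.symm.injective hr)
  refine ⟨r, π, c, w, hπsurj, hc, hvc, hwdist, ?_⟩
  -- the reciprocal sums
  let S : Fin r → k := fun i => ∑ j ∈ Finset.univ.filter (fun j => π j = i), (c j)⁻¹
  show ∀ i : Fin r, S i = 0
  -- key vanishing on the good set
  have hgood : ∀ s : Fin d → k, (∀ i, (∑ t, s t * w i t) ≠ 0) →
      ∑ i, S i * ∏ i' ∈ Finset.univ.erase i, (∑ t, s t * w i' t) = 0 := by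
    intro s hs
    have hL : ∀ j, (∑ i, s i * v j i) = c j * ∑ t, s t * w (π j) t := by
      intro j
      rw [Finset.mul_sum]
      refine Finset.sum_congr rfl fun i _ => ?_
      rw [hvc j]; simp [Pi.smul_apply, smul_eq_mul]; ring
    have hLne : ∀ j, (∑ i, s i * v j i) ≠ 0 := fun j => by
      rw [hL]; exact mul_ne_zero (hc j) (hs _)
    have h0 := h s hLne
    rw [esymm_eval_pred hm] at h0
    have h1 : ∑ j : Fin m, ∏ i ∈ Finset.univ.erase j,
        (c i * ∑ t, s t * w (π i) t) = 0 := by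
      rw [← h0]
      exact Finset.sum_congr rfl fun j _ => Finset.prod_congr rfl fun i _ => (hL i).symm
    set T : k := ∏ j : Fin m, (c j * ∑ t, s t * w (π j) t) with hT
    have hfne : ∀ j : Fin m, c j * (∑ t, s t * w (π j) t) ≠ 0 :=
      fun j => mul_ne_zero (hc j) (hs _)
    have hTne : T ≠ 0 := Finset.prod_ne_zero_iff.2 fun j _ => hfne j
    have h2 : ∀ j : Fin m, ∏ i ∈ Finset.univ.erase j, (c i * ∑ t, s t * w (π i) t)
        = T * (c j * ∑ t, s t * w (π j) t)⁻¹ := by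
      intro j
      rw [hT, ← Finset.prod_erase_mul Finset.univ _ (Finset.mem_univ j),
        mul_inv_cancel_right₀ (hfne j)]
    rw [Finset.sum_congr rfl fun j _ => h2 j, ← Finset.mul_sum] at h1
    have h3 : ∑ j : Fin m, (c j * ∑ t, s t * w (π j) t)⁻¹ = 0 :=
      (mul_eq_zero.1 h1).resolve_left hTne
    have h4 : ∑ i : Fin r, S i * (∑ t, s t * w i t)⁻¹ = 0 := by
      rw [← h3, ← Finset.sum_fiberwise Finset.univ π
        (fun j => (c j * ∑ t, s t * w (π j) t)⁻¹)]
      refine Finset.sum_congr rfl fun i _ => ?_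
      rw [Finset.sum_mul]
      refine Finset.sum_congr rfl fun j hj => ?_
      rw [Finset.mem_filter] at hj
      rw [hj.2, mul_inv]
    set U : k := ∏ i : Fin r, (∑ t, s t * w i t) with hU
    have h5 : ∀ i : Fin r, ∏ i' ∈ Finset.univ.erase i, (∑ t, s t * w i' t)
        = U * (∑ t, s t * w i t)⁻¹ := by
      intro i
      rw [hU, ← Finset.prod_erase_mul Finset.univ _ (Finset.mem_univ i),
        mul_inv_cancel_right₀ (hs i)]
    calc ∑ i, S i * ∏ i' ∈ Finset.univ.erase i, (∑ t, s t * w i' t)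
        = ∑ i, U * (S i * (∑ t, s t * w i t)⁻¹) := by
          refine Finset.sum_congr rfl fun i _ => ?_
          rw [h5 i]; ring
      _ = U * ∑ i, S i * (∑ t, s t * w i t)⁻¹ := by rw [← Finset.mul_sum]
      _ = 0 := by rw [h4, mul_zero]
  -- the polynomial identity
  let P : Fin r → MvPolynomial (Fin d) k :=
    fun i => ∑ t, MvPolynomial.C (w i t) * MvPolynomial.X t
  have hPe : ∀ i s, MvPolynomial.eval s (P i) = ∑ t, s t * w i t :=
    fun i s => eval_linear (w i) s
  let F : MvPolynomial (Fin d) k :=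
    ∑ i, MvPolynomial.C (S i) * ∏ i' ∈ Finset.univ.erase i, P i'
  let G : MvPolynomial (Fin d) k := ∏ i, P i
  have hevalF : ∀ s, MvPolynomial.eval s F
      = ∑ i, S i * ∏ i' ∈ Finset.univ.erase i, (∑ t, s t * w i' t) := by
    intro s
    show MvPolynomial.eval s (∑ i, MvPolynomial.C (S i) * ∏ i' ∈ Finset.univ.erase i, P i') = _
    rw [map_sum]
    refine Finset.sum_congr rfl fun i _ => ?_
    rw [map_mul, eval_C, map_prod]
    exact congrArg _ (Finset.prod_congr rfl fun i' _ => hPe i' s)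
  have hFG : ∀ s, MvPolynomial.eval s (F * G) = 0 := by
    intro s
    rw [map_mul]
    by_cases hs : ∀ i, (∑ t, s t * w i t) ≠ 0
    · rw [hevalF s, hgood s hs, zero_mul]
    · push_neg at hs
      obtain ⟨i, hi⟩ := hs
      have : MvPolynomial.eval s G = 0 := by
        show MvPolynomial.eval s (∏ i, P i) = 0
        rw [map_prod]
        exact Finset.prod_eq_zero (Finset.mem_univ i) (by rw [hPe]; exact hi)
      rw [this, mul_zero]
  have hF0 : F = 0 := by
    have hFG0 : F * G = 0 := MvPolynomial.funext fun x => by rw [hFG x, map_zero]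
    have hGne : G ≠ 0 :=
      Finset.prod_ne_zero_iff.2 fun i _ => linear_ne_zero (hw0 i)
    exact (mul_eq_zero.1 hFG0).resolve_right hGne
  -- find the special point and conclude
  intro i0
  obtain ⟨t0, ht0⟩ : ∃ t, w i0 t ≠ 0 := by
    by_contra hcon; push_neg at hcon; exact hw0 i0 (funext hcon)
  set a := w i0 t0 with ha
  let w'' : Fin r → Fin d → k := fun i => w i - (w i t0 / a) • w i0
  have hw''ne : ∀ i, i ≠ i0 → w'' i ≠ 0 := by
    intro i hi hz
    have : w i = (w i t0 / a) • w i0 := by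
      have := sub_eq_zero.1 hz
      exact this
    exact hwdist i i0 hi _ this
  let Q : MvPolynomial (Fin d) k := ∏ i ∈ Finset.univ.erase i0,
    (∑ t, MvPolynomial.C (w'' i t) * MvPolynomial.X t)
  have hQne : Q ≠ 0 := Finset.prod_ne_zero_iff.2 fun i hi =>
    linear_ne_zero (hw''ne i (Finset.mem_erase.1 hi).1)
  obtain ⟨x, hx⟩ := exists_eval_ne hQne
  let s0 : Fin d → k := fun t => x t - ((∑ t', x t' * w i0 t') / a) * (Pi.single t0 1 : Fin d → k) t
  have hs0 : ∀ i, (∑ t, s0 t * w i t) = ∑ t, x t * w'' i t := by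
    intro i
    have hsingle : ∑ t, (Pi.single t0 1 : Fin d → k) t * w i t = w i t0 := by
      rw [Finset.sum_eq_single t0]
      · simp
      · intro b _ hb; simp [Pi.single_apply, hb]
      · intro hb; exact absurd (Finset.mem_univ t0) hb
    have lhs : ∑ t, s0 t * w i t
        = (∑ t, x t * w i t) - ((∑ t', x t' * w i0 t') / a) * w i t0 := by
      rw [← hsingle, Finset.mul_sum, ← Finset.sum_sub_distrib]
      refine Finset.sum_congr rfl fun t _ => ?_
      show (x t - ((∑ t', x t' * w i0 t') / a) * (Pi.single t0 1 : Fin d → k) t) * w i t = _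
      ring
    rw [lhs]
    have rhs : ∑ t, x t * w'' i t
        = (∑ t, x t * w i t) - (w i t0 / a) * ∑ t, x t * w i0 t := by
      rw [Finset.mul_sum, ← Finset.sum_sub_distrib]
      refine Finset.sum_congr rfl fun t _ => ?_
      show x t * (w i t - (w i t0 / a) * w i0 t) = _
      ring
    rw [rhs]
    ring
  have hM0 : (∑ t, s0 t * w i0 t) = 0 := by
    rw [hs0 i0]
    have hz : w'' i0 = 0 := by
      show w i0 - (w i0 t0 / a) • w i0 = 0
      rw [← ha, div_self ht0, one_smul, sub_self]
    rw [hz]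
    simp
  have hMne : ∀ i, i ≠ i0 → (∑ t, s0 t * w i t) ≠ 0 := by
    intro i hi
    rw [hs0 i]
    have hxQ : MvPolynomial.eval x (∑ t, MvPolynomial.C (w'' i t) * MvPolynomial.X t) ≠ 0 := by
      intro h0
      apply hx
      show MvPolynomial.eval x (∏ i ∈ Finset.univ.erase i0,
        (∑ t, MvPolynomial.C (w'' i t) * MvPolynomial.X t)) = 0
      rw [map_prod]
      exact Finset.prod_eq_zero (Finset.mem_erase.2 ⟨hi, Finset.mem_univ _⟩)
        h0
    rwa [eval_linear] at hxQ
  have hsingle : ∑ i, S i * ∏ i' ∈ Finset.univ.erase i, (∑ t, s0 t * w i' t)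
      = S i0 * ∏ i' ∈ Finset.univ.erase i0, (∑ t, s0 t * w i' t) :=
    Finset.sum_eq_single i0
      (fun b _ hb => by
        rw [Finset.prod_eq_zero (Finset.mem_erase.2 ⟨Ne.symm hb, Finset.mem_univ _⟩) hM0,
          mul_zero])
      (fun hb => absurd (Finset.mem_univ i0) hb)
  have hkey : S i0 * ∏ i' ∈ Finset.univ.erase i0, (∑ t, s0 t * w i' t) = 0 := by
    rw [← hsingle, ← hevalF s0, hF0, map_zero]
  have hprodne : (∏ i' ∈ Finset.univ.erase i0, (∑ t, s0 t * w i' t)) ≠ 0 :=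
    Finset.prod_ne_zero_iff.2 fun i' hi' => hMne i' (Finset.mem_erase.1 hi').1
  exact (mul_eq_zero.1 hkey).resolve_right hprodne
end

section
/- Let k be an infinite field, m ≥ 2, π a partition of {1,...,m} into parts each of size at least 2, and c_1,...,c_m ∈ k^× scalars such that ∑_{j ∈ π^i} 1/c_j = 0 for every part π^i of π. Then the (m−1)-st elementary symmetric polynomial E_{m−1} vanishes identically on the subspace V_{π,c} ≤ k^m spanned by the vectors v_i = ∑_{j ∈ π^i} c_j e_j for i = 1, ..., (number of parts of π). -/
open MvPolynomial

/-- Given a partition `π` of `{1,…,m}` into parts of size at least 2 and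
nonzero scalars `c` with vanishing reciprocal sums over each part, the
`(m−1)`-st elementary symmetric polynomial vanishes identically on the subspace
`V_{π,c}` spanned by the vectors `vᵢ = ∑_{j ∈ πⁱ} cⱼ eⱼ`. -/
theorem esymm_vanishes_on_V_pi_c
    (k : Type*) [Field k] [Infinite k] (m : ℕ) (hm : 2 ≤ m)
    (r : ℕ) (π : Fin m → Fin r) (hπ : Function.Surjective π)
    (hparts : ∀ i, 2 ≤ (Finset.univ.filter (fun j => π j = i)).card)
    (c : Fin m → k) (hc : ∀ j, c j ≠ 0)
    (hsum : ∀ i, ∑ j ∈ Finset.univ.filter (fun j => π j = i), (c j)⁻¹ = 0) :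
    ∀ w ∈ Submodule.span k (Set.range (fun i : Fin r =>
        (fun j : Fin m => if π j = i then c j else 0))),
      MvPolynomial.eval w (MvPolynomial.esymm (Fin m) k (m - 1)) = 0 := by
  intro w hw
  obtain ⟨t, ht⟩ := (Submodule.mem_span_range_iff_exists_fun k).mp hw
  have hwj : ∀ j, w j = t (π j) * c j := by
    intro j
    rw [← ht]
    simp only [Finset.sum_apply, Pi.smul_apply, smul_eq_mul, mul_ite, mul_zero]
    rw [Finset.sum_ite_eq Finset.univ (π j) (fun i => t i * c j)]
    simp
  -- rewrite eval of esymm as sum over subsets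
  rw [esymm, map_sum]
  simp only [map_prod, eval_X]
  -- reindex as sum over the missing element
  have key : ∑ S ∈ Finset.powersetCard (m - 1) Finset.univ, ∏ l ∈ S, w l
      = ∑ j : Fin m, ∏ l ∈ Finset.univ.erase j, w l := by
    refine (Finset.sum_bij (fun j _ => Finset.univ.erase j) ?_ ?_ ?_ ?_).symm
    · intro j _
      rw [Finset.mem_powersetCard]
      constructor
      · exact Finset.subset_univ _
      · rw [Finset.card_erase_of_mem (Finset.mem_univ j), Finset.card_univ, Fintype.card_fin]
    · intro a _ b _ h
      by_contra hab
      have h' : Finset.univ.erase a = Finset.univ.erase b := h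
      have hb : b ∈ Finset.univ.erase a := Finset.mem_erase.mpr ⟨Ne.symm hab, Finset.mem_univ b⟩
      rw [h'] at hb
      exact (Finset.mem_erase.mp hb).1 rfl
    · intro S hS
      rw [Finset.mem_powersetCard] at hS
      have hcompl : Sᶜ.card = 1 := by
        rw [Finset.card_compl, Fintype.card_fin, hS.2]
        omega
      obtain ⟨j, hj⟩ := Finset.card_eq_one.mp hcompl
      refine ⟨j, Finset.mem_univ j, ?_⟩
      have : S = {j}ᶜ := by rw [← hj, compl_compl]
      rw [this]
      ext x
      simp [Finset.mem_erase, eq_comm, Ne]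
    · intro j _
      rfl
  rw [key, ← Finset.sum_fiberwise Finset.univ π (fun j => ∏ l ∈ Finset.univ.erase j, w l)]
  refine Finset.sum_eq_zero fun i _ => ?_
  set P : Finset (Fin m) := Finset.univ.filter (fun j => π j = i) with hP
  have hsplit : ∀ j ∈ P, ∏ l ∈ Finset.univ.erase j, w l
      = (∏ l ∈ Pᶜ, w l) * (t i ^ (P.card - 1) * ((∏ l ∈ P, c l) * (c j)⁻¹)) := by
    intro j hj
    have : Finset.univ.erase j = (P.erase j) ∪ Pᶜ := by
      ext x
      simp only [Finset.mem_erase, Finset.mem_univ, and_true, Finset.mem_union,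
        Finset.mem_compl]
      constructor
      · intro hx
        by_cases hxP : x ∈ P
        · exact Or.inl ⟨hx, hxP⟩
        · exact Or.inr hxP
      · rintro (⟨hx, _⟩ | hx)
        · exact hx
        · rintro rfl; exact hx hj
    rw [this, Finset.prod_union (by
      simp only [Finset.disjoint_right, Finset.mem_compl, Finset.mem_erase]
      tauto)]
    have hprod : ∏ l ∈ P.erase j, w l = t i ^ (P.card - 1) * ((∏ l ∈ P, c l) * (c j)⁻¹) := by
      have hwl : ∀ l ∈ P.erase j, w l = t i * c l := by
        intro l hl
        have : π l = i := by
          have := (Finset.mem_erase.mp hl).2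
          simpa [hP] using this
        rw [hwj, this]
      rw [Finset.prod_congr rfl hwl, Finset.prod_mul_distrib, Finset.prod_const,
        Finset.card_erase_of_mem hj]
      congr 1
      rw [← Finset.prod_erase_mul P c hj, mul_assoc, mul_inv_cancel₀ (hc j), mul_one]
    rw [hprod, mul_comm]
  rw [Finset.sum_congr rfl hsplit]
  simp only [← Finset.mul_sum, ← Finset.sum_mul]
  rw [hsum i]
  ring
end

section
/- Let k be a field of characteristic zero, d a positive integer, and m = 2d. For each perfect matching p = {p_1, ..., p_d} of {1, ..., 2d}, let W_p ≤ k^{2d} be the d-dimensional subspace defined by the equations ∑_{j ∈ p_α} x_j = 0 for α = 1, ..., d (equivalently, spanned by the vectors e_a − e_b for {a,b} ∈ p). Then E_{2d−1} vanishes identically on W_p, and distinct matchings p ≠ p' give distinct subspaces W_p ≠ W_{p'}. -/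
open MvPolynomial

/-- A perfect matching of `{1, …, 2d}`: a partition into `d` two-element parts. -/
def IsPerfectMatching (d : ℕ) (P : Finset (Finset (Fin (2 * d)))) : Prop :=
  P.card = d ∧ (∀ A ∈ P, A.card = 2) ∧
    (∀ A ∈ P, ∀ B ∈ P, A ≠ B → Disjoint A B) ∧ P.sup id = Finset.univ

/-- The subspace of `k^{2d}` cut out by the equations `∑_{j ∈ A} x_j = 0`,
one for each part `A` of the matching `P`. -/
noncomputable def matchingSubspace (k : Type*) [Field k] (d : ℕ)
    (P : Finset (Finset (Fin (2 * d)))) : Submodule k (Fin (2 * d) → k) :=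
  ⨅ A ∈ P, LinearMap.ker (∑ j ∈ A, (LinearMap.proj j : (Fin (2 * d) → k) →ₗ[k] k))

lemma mem_matchingSubspace_iff (k : Type*) [Field k] (d : ℕ)
    (P : Finset (Finset (Fin (2 * d)))) (x : Fin (2 * d) → k) :
    x ∈ matchingSubspace k d P ↔ ∀ A ∈ P, ∑ j ∈ A, x j = 0 := by
  simp [matchingSubspace, Submodule.mem_iInf, LinearMap.mem_ker, LinearMap.sum_apply]

lemma eval_esymm_eq (k : Type*) [Field k] (d : ℕ) (hd : 0 < d) (x : Fin (2 * d) → k) :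
    MvPolynomial.eval x (MvPolynomial.esymm (Fin (2 * d)) k (2 * d - 1)) =
      ∑ j : Fin (2 * d), ∏ i ∈ Finset.univ.erase j, x i := by
  rw [esymm, map_sum]
  refine (Finset.sum_bij (fun j _ => Finset.univ.erase j) ?_ ?_ ?_ ?_).symm
  · intro j _
    simp [Finset.mem_powersetCard, Finset.card_erase_of_mem]
  · intro a _ b _ h
    by_contra hab
    have hb : b ∈ Finset.univ.erase a := Finset.mem_erase.2 ⟨fun hh => hab hh.symm, Finset.mem_univ b⟩
    rw [h] at hb
    exact (Finset.mem_erase.1 hb).1 rfl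
  · intro t ht
    rw [Finset.mem_powersetCard] at ht
    have hc : tᶜ.card = 1 := by
      have h1 : tᶜ.card = 2 * d - t.card := by
        rw [Finset.card_compl, Fintype.card_fin]
      have h3 := ht.2
      omega
    obtain ⟨j, hj⟩ := Finset.card_eq_one.1 hc
    refine ⟨j, Finset.mem_univ j, ?_⟩
    have : t = {j}ᶜ := by rw [← hj, compl_compl]
    rw [this, Finset.compl_eq_univ_sdiff, Finset.sdiff_singleton_eq_erase]
  · intro j _
    simp [eval_prod]

lemma esymm_vanish (k : Type*) [Field k] (d : ℕ) (hd : 0 < d)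
    (P : Finset (Finset (Fin (2 * d)))) (hP : IsPerfectMatching d P)
    (x : Fin (2 * d) → k) (hx : x ∈ matchingSubspace k d P) :
    MvPolynomial.eval x (MvPolynomial.esymm (Fin (2 * d)) k (2 * d - 1)) = 0 := by
  obtain ⟨hcard, h2, hdisj, hsup⟩ := hP
  rw [eval_esymm_eq k d hd x]
  rw [mem_matchingSubspace_iff] at hx
  have huniv : (Finset.univ : Finset (Fin (2 * d))) = P.biUnion (fun A => A) := by
    rw [← Finset.sup_eq_biUnion]; exact hsup.symm
  rw [show (∑ j : Fin (2 * d), ∏ i ∈ Finset.univ.erase j, x i) =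
      ∑ j ∈ P.biUnion (fun A => A), ∏ i ∈ Finset.univ.erase j, x i from
    Finset.sum_congr huniv fun _ _ => rfl]
  rw [Finset.sum_biUnion (fun A hA B hB hne => hdisj A hA B hB hne)]
  refine Finset.sum_eq_zero fun A hA => ?_
  obtain ⟨a, b, hab, hAab⟩ := Finset.card_eq_two.1 (h2 A hA)
  subst hAab
  have hs : x a + x b = 0 := by
    have h := hx _ hA; rwa [Finset.sum_pair hab] at h
  rw [Finset.sum_pair hab]
  have h1 : ∏ i ∈ Finset.univ.erase a, x i
      = x b * ∏ i ∈ (Finset.univ.erase a).erase b, x i := by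
    rw [Finset.mul_prod_erase _ _ (Finset.mem_erase.2 ⟨Ne.symm hab, Finset.mem_univ b⟩)]
  have h2' : ∏ i ∈ Finset.univ.erase b, x i
      = x a * ∏ i ∈ (Finset.univ.erase b).erase a, x i := by
    rw [Finset.mul_prod_erase _ _ (Finset.mem_erase.2 ⟨hab, Finset.mem_univ a⟩)]
  have hsame : (Finset.univ.erase b).erase a = (Finset.univ.erase a).erase b :=
    Finset.erase_right_comm
  rw [h1, h2', hsame, ← add_mul, add_comm (x b) (x a), hs, zero_mul]

lemma finrank_matchingSubspace (k : Type*) [Field k] (d : ℕ)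
    (P : Finset (Finset (Fin (2 * d)))) (hP : IsPerfectMatching d P) :
    Module.finrank k (matchingSubspace k d P) = d := by
  obtain ⟨hcard, h2, hdisj, hsup⟩ := hP
  set F : (Fin (2 * d) → k) →ₗ[k] ({A // A ∈ P} → k) :=
    LinearMap.pi (fun A => ∑ j ∈ A.1, (LinearMap.proj j : (Fin (2 * d) → k) →ₗ[k] k)) with hF
  have hker : LinearMap.ker F = matchingSubspace k d P := by
    ext x
    simp [hF, LinearMap.mem_ker, mem_matchingSubspace_iff, funext_iff,
      LinearMap.pi_apply, LinearMap.sum_apply, Subtype.forall]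
  have hne : ∀ A ∈ P, A.Nonempty := fun A hA => Finset.card_pos.1 (by rw [h2 A hA]; norm_num)
  have hsurj : Function.Surjective F := by
    intro y
    refine ⟨fun j => ∑ A ∈ P.attach, if A.1.min' (hne A.1 A.2) = j then y A else 0, ?_⟩
    funext B
    simp only [hF, LinearMap.pi_apply, LinearMap.sum_apply, LinearMap.proj_apply]
    rw [Finset.sum_comm]
    have key : ∀ A : {A // A ∈ P}, (A.1.min' (hne A.1 A.2) ∈ B.1) ↔ A = B := by
      intro A
      constructor
      · intro h
        by_contra hAB
        have hne2 : A.1 ≠ B.1 := fun h' => hAB (Subtype.ext h')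
        exact Finset.disjoint_left.1 (hdisj A.1 A.2 B.1 B.2 hne2)
          (Finset.min'_mem A.1 (hne A.1 A.2)) h
      · rintro rfl; exact Finset.min'_mem A.1 (hne A.1 A.2)
    calc ∑ A ∈ P.attach, ∑ j ∈ B.1, (if A.1.min' (hne A.1 A.2) = j then y A else 0)
        = ∑ A ∈ P.attach, (if A.1.min' (hne A.1 A.2) ∈ B.1 then y A else 0) := by
          refine Finset.sum_congr rfl fun A _ => ?_
          rw [Finset.sum_ite_eq B.1 (A.1.min' (hne A.1 A.2)) (fun _ => y A)]
      _ = ∑ A ∈ P.attach, (if A = B then y A else 0) := by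
          refine Finset.sum_congr rfl fun A _ => ?_
          rw [if_congr (key A) rfl rfl]
      _ = y B := by rw [Finset.sum_ite_eq' P.attach B y, if_pos (Finset.mem_attach _ _)]
  have h1 := LinearMap.finrank_range_add_finrank_ker F
  rw [LinearMap.range_eq_top.2 hsurj, finrank_top] at h1
  have hcod : Module.finrank k ({A // A ∈ P} → k) = d := by
    rw [Module.finrank_pi, Fintype.card_coe, hcard]
  have hdom : Module.finrank k (Fin (2 * d) → k) = 2 * d := by
    rw [Module.finrank_pi, Fintype.card_fin]
  rw [hker, hcod, hdom] at h1
  omega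

lemma matchingSubspace_ne (k : Type*) [Field k] [CharZero k] (d : ℕ)
    (P P' : Finset (Finset (Fin (2 * d))))
    (hP : IsPerfectMatching d P) (hP' : IsPerfectMatching d P')
    (A : Finset (Fin (2 * d))) (hA : A ∈ P) (hA' : A ∉ P') :
    matchingSubspace k d P ≠ matchingSubspace k d P' := by
  obtain ⟨_, h2, hdisj, hsup⟩ := hP
  obtain ⟨_, h2', hdisj', hsup'⟩ := hP'
  obtain ⟨a, b, hab, rfl⟩ := Finset.card_eq_two.1 (h2 A hA)
  intro heq
  set v : Fin (2 * d) → k := fun j => if j = a then 1 else if j = b then -1 else 0 with hv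
  have hvW : v ∈ matchingSubspace k d P := by
    rw [mem_matchingSubspace_iff]
    intro B hB
    by_cases hBA : B = {a, b}
    · subst hBA
      rw [Finset.sum_pair hab]
      simp [hv, hab, hab.symm]
    · have hdis := hdisj _ hB _ hA hBA
      refine Finset.sum_eq_zero fun j hj => ?_
      have hj2 : j ∉ ({a, b} : Finset (Fin (2 * d))) := Finset.disjoint_left.1 hdis hj
      simp only [Finset.mem_insert, Finset.mem_singleton, not_or] at hj2
      simp [hv, hj2.1, hj2.2]
  have ha' : a ∈ P'.sup id := by rw [hsup']; exact Finset.mem_univ a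
  obtain ⟨B', hB', haB'⟩ := Finset.mem_sup.1 ha'
  rw [id_eq] at haB'
  obtain ⟨u, w, huw, hB'uw⟩ := Finset.card_eq_two.1 (h2' B' hB')
  have hc : ∃ c, c ≠ a ∧ B' = {a, c} := by
    subst hB'uw
    rcases Finset.mem_insert.1 haB' with rfl | hw
    · exact ⟨w, fun h => huw h.symm, rfl⟩
    · rw [Finset.mem_singleton] at hw
      subst hw
      exact ⟨u, fun h => huw h, Finset.pair_comm u a⟩
  obtain ⟨c, hca, rfl⟩ := hc
  have hcb : c ≠ b := by
    rintro rfl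
    exact hA' hB'
  have hvW' : v ∈ matchingSubspace k d P' := heq ▸ hvW
  rw [mem_matchingSubspace_iff] at hvW'
  have h0 := hvW' _ hB'
  rw [Finset.sum_pair (fun h => hca h.symm)] at h0
  simp [hv, hca, hcb] at h0

/-- For each perfect matching `p` of `{1, …, 2d}`, the subspace `W_p` is
`d`-dimensional, `E_{2d−1}` vanishes identically on it, and distinct matchings
give distinct subspaces. -/
theorem matching_subspaces_esymm_vanish_and_distinct
    (k : Type*) [Field k] [CharZero k] (d : ℕ) (hd : 0 < d) :
    (∀ P : Finset (Finset (Fin (2 * d))), IsPerfectMatching d P →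
      Module.finrank k (matchingSubspace k d P) = d ∧
      ∀ x ∈ matchingSubspace k d P,
        MvPolynomial.eval x (MvPolynomial.esymm (Fin (2 * d)) k (2 * d - 1)) = 0) ∧
    (∀ P P' : Finset (Finset (Fin (2 * d))),
      IsPerfectMatching d P → IsPerfectMatching d P' → P ≠ P' →
      matchingSubspace k d P ≠ matchingSubspace k d P') := by
  constructor
  · intro P hP
    exact ⟨finrank_matchingSubspace k d P hP, fun x hx => esymm_vanish k d hd P hP x hx⟩
  · intro P P' hP hP' hne
    have h : ¬ ∀ A, A ∈ P ↔ A ∈ P' := fun h => hne (Finset.ext h)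
    obtain ⟨A, hA⟩ := not_forall.1 h
    by_cases hAP : A ∈ P
    · have hAP' : A ∉ P' := fun h' => hA ⟨fun _ => h', fun _ => hAP⟩
      exact matchingSubspace_ne k d P P' hP hP' A hAP hAP'
    · have hAP' : A ∈ P' := by
        by_contra h'
        exact hA ⟨fun h'' => absurd h'' hAP, fun h'' => absurd h'' h'⟩
      exact (matchingSubspace_ne k d P' P hP' hP A hAP' hAP).symm
end
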